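/- arXiv:1602.06413 — 2 statements merged into one kernel-verified Lean document; each statement's English description precedes it below -/
import Mathlib

section
/- Special case of Hermann's theorem for rank 2: if T ∈ V₂ is invariant under a rotation R_θ about the z-axis by angle θ = 2π/n with n ≥ 3 (i.e., R_θ T R_θᵀ = T), then T is invariant under all rotations about the z-axis, and hence T is a scalar multiple of diag(−1/3, −1/3, 2/3). -/
/-!
Since `R_θ` is orthogonal, `R_θ T R_θᵀ = T` says that `T` commutes with `R_θ`, a condition linear
in `T`. For `θ = 2π/n` with `n ≥ 3` we have `sin θ ≠ 0`, so `R_θ` restricted to the xy-plane has no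
nonzero fixed vector, which kills the mixed entries `T₀₂, T₁₂`; and the only symmetric 2×2
matrices commuting with a nontrivial plane rotation are scalars. Hence `T = diag(a, a, b)`, which
commutes with every `R_φ`, and `tr T = 0` gives `b = -2a`.
-/

open Matrix Real

/-- Rotation about the z axis by angle `θ`. -/
noncomputable def Rz (θ : ℝ) : Matrix (Fin 3) (Fin 3) ℝ :=
  !![Real.cos θ, -Real.sin θ, 0;
     Real.sin θ,  Real.cos θ, 0;
     0, 0, 1]

theorem Matrix.mul_mul_transpose_eq_iff_commute {n R : Type*} [Fintype n] [DecidableEq n]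
    [CommRing R] {A T : Matrix n n R} (hA : Aᵀ * A = 1) :
    A * T * Aᵀ = T ↔ Commute A T := by
  have hA' : A * Aᵀ = 1 := mul_eq_one_comm.mp hA
  constructor
  · intro h
    calc A * T = A * T * (Aᵀ * A) := by rw [hA, Matrix.mul_one]
      _ = T * A := by rw [← Matrix.mul_assoc, h]
  · intro h
    rw [h.eq, Matrix.mul_assoc, hA', Matrix.mul_one]

theorem Rz_transpose_mul_self (θ : ℝ) : (Rz θ)ᵀ * Rz θ = 1 := by
  ext i j
  fin_cases i <;> fin_cases j <;> simp [Rz, mul_apply, Fin.sum_univ_three] <;> ring_nf <;>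
    simp [sin_sq_add_cos_sq, cos_sq_add_sin_sq]

theorem commute_Rz_diagonal (θ x y : ℝ) : Commute (Rz θ) (diagonal ![x, x, y]) := by
  ext i j
  fin_cases i <;> fin_cases j <;> simp [Rz, mul_apply, Fin.sum_univ_three] <;> ring

theorem eq_diagonal_of_commute_Rz {θ : ℝ} (hθ : sin θ ≠ 0) {T : Matrix (Fin 3) (Fin 3) ℝ}
    (hT : T.IsSymm) (h : Commute (Rz θ) T) : T = diagonal ![T 0 0, T 0 0, T 2 2] := by
  have hsymm (i j : Fin 3) : T j i = T i j := by simpa using congrFun (congrFun hT i) j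
  have entry (i j : Fin 3) := congrFun (congrFun h.eq i) j
  have h00 := entry 0 0
  have h01 := entry 0 1
  have h02 := entry 0 2
  have h12 := entry 1 2
  simp only [Rz, mul_apply, of_apply, cons_val', cons_val_fin_one, cons_val_zero, cons_val_one,
    cons_val, Fin.sum_univ_three, hsymm 0 1, neg_mul, zero_mul, add_zero, mul_zero, mul_neg,
    mul_one, zero_add] at h00 h01 h02 h12
  have h01_zero : T 0 1 = 0 :=
    mul_left_cancel₀ hθ (by linear_combination (-1 / 2 : ℝ) * h00)
  have h11 : T 1 1 = T 0 0 := mul_left_cancel₀ hθ (by linear_combination -h01)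
  have h02_zero : T 0 2 = 0 := by
    have hpos : 0 < (cos θ - 1) ^ 2 + sin θ ^ 2 := by positivity
    exact mul_left_cancel₀ hpos.ne' (by linear_combination (cos θ - 1) * h02 + sin θ * h12)
  have h12_zero : T 1 2 = 0 :=
    mul_left_cancel₀ hθ (by linear_combination -h02 + (cos θ - 1) * h02_zero)
  ext i j
  fin_cases i <;> fin_cases j <;>
    simp [hsymm 0 1, hsymm 0 2, hsymm 1 2, h01_zero, h11, h02_zero, h12_zero]

theorem sin_two_pi_div_pos {n : ℕ} (hn : 3 ≤ n) : 0 < sin (2 * π / n) := by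
  have hn' : (3 : ℝ) ≤ n := by exact_mod_cast hn
  apply sin_pos_of_pos_of_lt_pi (by positivity)
  rw [div_lt_iff₀ (by positivity)]
  nlinarith [pi_pos]

/-- Hermann's theorem for rank 2: if a symmetric traceless 3×3 matrix `T`
is invariant under the rotation about the z-axis by `2π/n` with `n ≥ 3`, then `T` is
invariant under all rotations about the z-axis, and hence `T` is a scalar multiple of
`diag(−1/3, −1/3, 2/3)`. -/
theorem stmt_9 (n : ℕ) (hn : 3 ≤ n) (T : Matrix (Fin 3) (Fin 3) ℝ)
    (hTsymm : T.IsSymm) (hTtr : T.trace = 0)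
    (hinv : Rz (2 * π / n) * T * (Rz (2 * π / n))ᵀ = T) :
    (∀ θ : ℝ, Rz θ * T * (Rz θ)ᵀ = T) ∧
    (∃ c : ℝ, T = c • Matrix.diagonal ![-1/3, -1/3, 2/3]) := by
  have hT : T = diagonal ![T 0 0, T 0 0, T 2 2] :=
    eq_diagonal_of_commute_Rz (sin_two_pi_div_pos hn).ne' hTsymm
      ((mul_mul_transpose_eq_iff_commute (Rz_transpose_mul_self _)).mp hinv)
  have h22 : T 2 2 = -2 * T 0 0 := by
    have h11 : T 1 1 = T 0 0 := by simpa using congrFun (congrFun hT 1) 1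
    linarith [trace_fin_three T]
  refine ⟨fun θ => ?_, -3 * T 0 0, ?_⟩
  · rw [mul_mul_transpose_eq_iff_commute (Rz_transpose_mul_self θ), hT]
    exact commute_Rz_diagonal θ _ _
  · rw [hT, h22, ← diagonal_smul]
    congr 1
    ext i
    fin_cases i <;> simp <;> ring
end

section
/- A linear map S : V₂ → V₂ is fixed on the left by all rotations about the z-axis (D(R_θ) ∘ S = S for all θ) if and only if the range of S is contained in the span of the single tensor L₀ = √(3/2)(e₃⊗e₃ − I/3); equivalently, in the standard basis, only the first row of the matrix of S can be nonzero. -/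
/-! A matrix fixed by conjugation with the quarter-turn `Rz (π / 2)` commutes with it, so it is
block diagonal of the form `[[a, -b, 0], [b, a, 0], [0, 0, d]]`; symmetry forces `b = 0` and
tracelessness `d = -2a`, which is a multiple of `L0`. Conversely `L0` is fixed by every `Rz θ`,
since `Rz θ` is orthogonal and fixes `e₃`. -/

open Matrix Real

/-- `L₀ = √(3/2)(e₃⊗e₃ − I/3)`. -/
noncomputable def L0 : Matrix (Fin 3) (Fin 3) ℝ :=
  Real.sqrt (3 / 2) • (single 2 2 (1 : ℝ) - (3 : ℝ)⁻¹ • (1 : Matrix (Fin 3) (Fin 3) ℝ))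

lemma Rz_mul_transpose (θ : ℝ) : Rz θ * (Rz θ)ᵀ = 1 := by
  ext i j
  fin_cases i <;> fin_cases j <;>
    simp [Rz, mul_apply, Fin.sum_univ_three, one_apply] <;>
    nlinarith [sin_sq_add_cos_sq θ]

lemma Rz_mul_single_two_two_mul_transpose (θ : ℝ) :
    Rz θ * single 2 2 (1 : ℝ) * (Rz θ)ᵀ = single 2 2 1 := by
  ext i j
  fin_cases i <;> fin_cases j <;>
    simp [Rz, mul_apply, single, vecHead, vecTail]

lemma Rz_mul_L0_mul_transpose (θ : ℝ) : Rz θ * L0 * (Rz θ)ᵀ = L0 := by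
  rw [L0, Matrix.mul_smul, Matrix.smul_mul, Matrix.mul_sub, Matrix.sub_mul, Matrix.mul_smul,
    Matrix.smul_mul, Matrix.mul_one,
    Rz_mul_single_two_two_mul_transpose, Rz_mul_transpose]

lemma Rz_pi_div_two_mul_mul_transpose (M : Matrix (Fin 3) (Fin 3) ℝ) :
    Rz (π / 2) * M * (Rz (π / 2))ᵀ =
      !![M 1 1, -M 1 0, -M 1 2; -M 0 1, M 0 0, M 0 2; -M 2 1, M 2 0, M 2 2] := by
  ext i j
  fin_cases i <;> fin_cases j <;>
    simp [Rz, mul_apply, Fin.sum_univ_three, cos_pi_div_two, sin_pi_div_two, vecMul, dotProduct]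

lemma eq_smul_L0_of_Rz_pi_div_two_conj_eq {M : Matrix (Fin 3) (Fin 3) ℝ} (hsymm : M.IsSymm)
    (htrace : M.trace = 0) (hfix : Rz (π / 2) * M * (Rz (π / 2))ᵀ = M) :
    M = (√(3 / 2) * M 2 2) • L0 := by
  rw [Rz_pi_div_two_mul_mul_transpose] at hfix
  have entry (i j : Fin 3) := congrFun₂ hfix i j
  have h00 : M 1 1 = M 0 0 := by simpa using entry 0 0
  have h01 : -M 1 0 = M 0 1 := by simpa using entry 0 1
  have h02 : -M 1 2 = M 0 2 := by simpa using entry 0 2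
  have h12 : M 0 2 = M 1 2 := by simpa using entry 1 2
  have h10 : M 1 0 = M 0 1 := hsymm.apply 0 1
  have h20 : M 2 0 = M 0 2 := hsymm.apply 0 2
  have h21 : M 2 1 = M 1 2 := hsymm.apply 1 2
  have hdiag : M 0 0 + M 1 1 + M 2 2 = 0 := by
    simpa [trace, Fin.sum_univ_three] using htrace
  have hsqrt : √(3 / 2) * √(3 / 2) = 3 / 2 := mul_self_sqrt (by norm_num)
  ext i j
  fin_cases i <;> fin_cases j <;> simp [L0, single, one_apply, h10, h20, h21] <;> grind

/-- A linear map `S : V₂ → V₂` is fixed on the left by all rotations about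
the z-axis (`D(R_θ) ∘ S = S` for all `θ`) if and only if the range of `S` is contained in
the span of the single tensor `L₀`. -/
theorem stmt_16 (S : Matrix (Fin 3) (Fin 3) ℝ →ₗ[ℝ] Matrix (Fin 3) (Fin 3) ℝ)
    (hS : ∀ T : Matrix (Fin 3) (Fin 3) ℝ, T.IsSymm → T.trace = 0 →
      (S T).IsSymm ∧ (S T).trace = 0) :
    (∀ θ : ℝ, ∀ T : Matrix (Fin 3) (Fin 3) ℝ, T.IsSymm → T.trace = 0 →
        Rz θ * S T * (Rz θ)ᵀ = S T)
    ↔ (∀ T : Matrix (Fin 3) (Fin 3) ℝ, T.IsSymm → T.trace = 0 →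
        ∃ c : ℝ, S T = c • L0) := by
  constructor
  · intro hfix T hT htr
    obtain ⟨hsymm, htrace⟩ := hS T hT htr
    exact ⟨_, eq_smul_L0_of_Rz_pi_div_two_conj_eq hsymm htrace (hfix (π / 2) T hT htr)⟩
  · intro hspan θ T hT htr
    obtain ⟨c, hc⟩ := hspan T hT htr
    rw [hc, Matrix.mul_smul, Matrix.smul_mul, Rz_mul_L0_mul_transpose]
end
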